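/- Let n ≥ 1, ρ > 0, and let u_{n+1}^ρ := e_{n+1} − L_n^ρ e_{n+1} (where e_{n+1}(x) = x^{n+1}). Then for every x ∈ (0,1) one has (1/B(nρx, nρ(1−x))) ∫₀¹ t^{nρx−1}(1−t)^{nρ(1−x)−1} u_{n+1}^ρ(t) dt = ((nρ)^{n+1}/(nρ)^{\overline{n+1}}) ∏_{k=0}^{n} (x − k/n), where x^{\overline{m}} = x(x+1)⋯(x+m−1) is the rising factorial; that is, the Lupaş–Mühlbach Beta operator of order nρ maps u_{n+1}^ρ to ((nρ)^{n+1}/(nρ)^{\overline{n+1}}) x(x−1)(x−1/n)⋯(x−(n−1)/n). -/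

import Mathlib

open MeasureTheory

/-- Euler Beta function `B(a,b) = ∫₀¹ t^(a-1) (1-t)^(b-1) dt`. -/
noncomputable def betaFn (a b : ℝ) : ℝ :=
  ∫ t in (0:ℝ)..1, t ^ (a - 1) * (1 - t) ^ (b - 1)

/-- The functionals `F_{n,k}^ρ`. -/
noncomputable def Ffun (n k : ℕ) (ρ : ℝ) (f : ℝ → ℝ) : ℝ :=
  if k = 0 then f 0
  else if k = n then f 1
  else (betaFn ((k : ℝ) * ρ) (((n : ℝ) - (k : ℝ)) * ρ))⁻¹ *
    ∫ t in (0:ℝ)..1, t ^ ((k : ℝ) * ρ - 1) * (1 - t) ^ (((n : ℝ) - (k : ℝ)) * ρ - 1) * f t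

/-- Bernstein basis polynomial `p_{n,k}(x)`. -/
noncomputable def bern (n k : ℕ) (x : ℝ) : ℝ :=
  (n.choose k : ℝ) * x ^ k * (1 - x) ^ (n - k)

/-- The operator `U_n^ρ`. -/
noncomputable def Uop (n : ℕ) (ρ : ℝ) (f : ℝ → ℝ) (x : ℝ) : ℝ :=
  ∑ k ∈ Finset.range (n + 1), Ffun n k ρ f * bern n k x

/-!
By the Beta–Gamma relation the Beta operator `𝔹_a` sends `t ^ m` to
`(a x)^(rising m) / a^(rising m)`, so it maps polynomials to polynomials of no larger degree,
fixes their values at `0` and `1`, and at an interior node `k / n` it is exactly the functional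
`F_{n,k}^ρ` when `a = nρ`. Hence `𝔹_{nρ} u_{n+1}^ρ` is a polynomial of degree at most `n + 1`
vanishing at all `n + 1` nodes `k / n`; its coefficient of `x ^ (n + 1)` is that of
`𝔹_{nρ} t ^ (n + 1)`, since `L_n^ρ e_{n+1}` has degree at most `n`, and this determines it as a
multiple of `∏ (x - k / n)`.
-/

open Polynomial Finset

namespace Lagrange

theorem eq_C_coeff_mul_nodal {R ι : Type*} [CommRing R] [IsDomain R] {s : Finset ι} {v : ι → R}
    (hvs : Set.InjOn v s) {p : R[X]} (hdeg : p.natDegree ≤ #s)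
    (hroot : ∀ i ∈ s, p.eval (v i) = 0) :
    p = C (p.coeff #s) * nodal s v := by
  refine eq_of_degree_sub_lt_of_eval_index_eq s hvs ?_ fun i hi => ?_
  · rw [degree_lt_iff_coeff_zero]
    intro m hm
    rw [coeff_sub, coeff_C_mul]
    rcases hm.eq_or_lt with rfl | hlt
    · rw [← natDegree_nodal (v := v), nodal_monic.coeff_natDegree, mul_one, natDegree_nodal,
        sub_self]
    · rw [coeff_eq_zero_of_natDegree_lt (hdeg.trans_lt hlt),
        coeff_eq_zero_of_natDegree_lt (p := nodal s v) (by rwa [natDegree_nodal]), mul_zero,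
        sub_zero]
  · rw [hroot i hi, eval_mul, eval_nodal_at_node hi, mul_zero]

end Lagrange

theorem Real.Gamma_add_nat_eq_ascPochhammer_mul {s : ℝ} (hs : 0 < s) (m : ℕ) :
    Real.Gamma (s + m) = (ascPochhammer ℝ m).eval s * Real.Gamma s := by
  induction m with
  | zero => simp
  | succ m ih =>
    rw [Nat.cast_succ, ← add_assoc, Real.Gamma_add_one (by positivity), ih,
      ascPochhammer_succ_right, eval_mul]
    simp only [eval_add, eval_X, eval_natCast]
    ring

section BetaFunction

variable {a b : ℝ}

theorem ofReal_betaFn (a b : ℝ) : (betaFn a b : ℂ) = Complex.betaIntegral a b := by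
  rw [betaFn, Complex.betaIntegral, ← intervalIntegral.integral_ofReal]
  refine intervalIntegral.integral_congr fun t ht => ?_
  rw [Set.uIcc_of_le zero_le_one] at ht
  have h1t : 0 ≤ 1 - t := sub_nonneg.2 ht.2
  push_cast [Complex.ofReal_cpow ht.1, Complex.ofReal_cpow h1t]
  rfl

theorem betaFn_eq_Gamma_mul_Gamma_div (ha : 0 < a) (hb : 0 < b) :
    betaFn a b = Real.Gamma a * Real.Gamma b / Real.Gamma (a + b) := by
  have h := Complex.Gamma_mul_Gamma_eq_betaIntegral (s := a) (t := b) (by simpa) (by simpa)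
  rw [← ofReal_betaFn, ← Complex.ofReal_add, Complex.Gamma_ofReal, Complex.Gamma_ofReal,
    Complex.Gamma_ofReal] at h
  rw [eq_div_iff (Real.Gamma_pos_of_pos (add_pos ha hb)).ne', mul_comm (betaFn a b)]
  exact_mod_cast h.symm

theorem betaFn_pos (ha : 0 < a) (hb : 0 < b) : 0 < betaFn a b := by
  rw [betaFn_eq_Gamma_mul_Gamma_div ha hb]
  have := Real.Gamma_pos_of_pos ha
  have := Real.Gamma_pos_of_pos hb
  have := Real.Gamma_pos_of_pos (add_pos ha hb)
  positivity

theorem betaFn_add_nat_div (ha : 0 < a) (hb : 0 < b) (m : ℕ) :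
    betaFn (a + m) b / betaFn a b =
      (ascPochhammer ℝ m).eval a / (ascPochhammer ℝ m).eval (a + b) := by
  rw [betaFn_eq_Gamma_mul_Gamma_div ha hb, betaFn_eq_Gamma_mul_Gamma_div (by positivity) hb,
    add_right_comm, Real.Gamma_add_nat_eq_ascPochhammer_mul ha,
    Real.Gamma_add_nat_eq_ascPochhammer_mul (add_pos ha hb)]
  have := (Real.Gamma_pos_of_pos ha).ne'
  have := (Real.Gamma_pos_of_pos hb).ne'
  have := (Real.Gamma_pos_of_pos (add_pos ha hb)).ne'
  have := (ascPochhammer_pos m (a + b) (add_pos ha hb)).ne'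
  field_simp

-- A positive integral forces integrability, since a non-integrable function has integral `0`.
theorem intervalIntegrable_betaWeight (ha : 0 < a) (hb : 0 < b) :
    IntervalIntegrable (fun t : ℝ => t ^ (a - 1) * (1 - t) ^ (b - 1)) volume 0 1 :=
  intervalIntegral.intervalIntegrable_of_integral_ne_zero (betaFn_pos ha hb).ne'

theorem integral_betaWeight_mul_pow (a b : ℝ) (m : ℕ) :
    ∫ t in (0:ℝ)..1, t ^ (a - 1) * (1 - t) ^ (b - 1) * t ^ m = betaFn (a + m) b := by
  rw [betaFn, intervalIntegral.integral_of_le zero_le_one,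
    intervalIntegral.integral_of_le zero_le_one]
  refine setIntegral_congr_fun measurableSet_Ioc fun t ht => ?_
  rw [add_sub_right_comm, Real.rpow_add ht.1, Real.rpow_natCast]
  ring

end BetaFunction

/-- The Lupaş–Mühlbach Beta operator of order `a`. -/
noncomputable def betaOp (a : ℝ) (f : ℝ → ℝ) (x : ℝ) : ℝ :=
  (betaFn (a * x) (a * (1 - x)))⁻¹ *
    ∫ t in (0:ℝ)..1, t ^ (a * x - 1) * (1 - t) ^ (a * (1 - x) - 1) * f t

section BetaOperator

variable {a x : ℝ}

theorem betaOp_add (ha : 0 < a) (hx : x ∈ Set.Ioo (0:ℝ) 1) {f g : ℝ → ℝ}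
    (hf : ContinuousOn f (Set.uIcc 0 1)) (hg : ContinuousOn g (Set.uIcc 0 1)) :
    betaOp a (fun t => f t + g t) x = betaOp a f x + betaOp a g x := by
  have hw := intervalIntegrable_betaWeight (mul_pos ha hx.1) (mul_pos ha (sub_pos.2 hx.2))
  simp only [betaOp, mul_add]
  rw [intervalIntegral.integral_add (hw.mul_continuousOn hf) (hw.mul_continuousOn hg), mul_add]

theorem betaOp_const_mul (c : ℝ) (f : ℝ → ℝ) :
    betaOp a (fun t => c * f t) x = c * betaOp a f x := by
  simp only [betaOp, mul_left_comm _ c, intervalIntegral.integral_const_mul]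

theorem betaOp_pow (ha : 0 < a) (hx : x ∈ Set.Ioo (0:ℝ) 1) (m : ℕ) :
    betaOp a (fun t => t ^ m) x =
      (ascPochhammer ℝ m).eval (a * x) / (ascPochhammer ℝ m).eval a := by
  have hax : 0 < a * x := mul_pos ha hx.1
  have hbx : 0 < a * (1 - x) := mul_pos ha (sub_pos.2 hx.2)
  rw [betaOp, integral_betaWeight_mul_pow, inv_mul_eq_div, betaFn_add_nat_div hax hbx]
  ring_nf

end BetaOperator

/-- The image of `t ^ m` under `betaOp a`, by `betaOp_pow`. -/
noncomputable def betaMomentPoly (a : ℝ) (m : ℕ) : ℝ[X] :=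
  C ((ascPochhammer ℝ m).eval a)⁻¹ * (ascPochhammer ℝ m).comp (C a * X)

noncomputable def betaOpPoly (a : ℝ) : ℝ[X] →ₗ[ℝ] ℝ[X] :=
  lsum fun m => LinearMap.toSpanSingleton ℝ ℝ[X] (betaMomentPoly a m)

section BetaOperatorOnPolynomials

variable {a : ℝ}

theorem eval_betaMomentPoly (a : ℝ) (m : ℕ) (x : ℝ) :
    (betaMomentPoly a m).eval x =
      (ascPochhammer ℝ m).eval (a * x) / (ascPochhammer ℝ m).eval a := by
  simp [betaMomentPoly, eval_comp, div_eq_inv_mul]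

theorem natDegree_betaMomentPoly_le (a : ℝ) (m : ℕ) : (betaMomentPoly a m).natDegree ≤ m := by
  refine (natDegree_C_mul_le _ _).trans (natDegree_comp_le.trans ?_)
  rw [ascPochhammer_natDegree]
  exact (Nat.mul_le_mul_left m ((natDegree_C_mul_le a X).trans natDegree_X_le)).trans_eq
    (mul_one m)

theorem coeff_betaMomentPoly_self (ha : a ≠ 0) (m : ℕ) :
    (betaMomentPoly a m).coeff m = a ^ m / (ascPochhammer ℝ m).eval a := by
  have hlin : (C a * X).natDegree = 1 := natDegree_C_mul_X a ha
  have hdeg : ((ascPochhammer ℝ m).comp (C a * X)).natDegree = m := by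
    rw [natDegree_comp, hlin, mul_one, ascPochhammer_natDegree]
  have htop : ((ascPochhammer ℝ m).comp (C a * X)).coeff m =
      ((ascPochhammer ℝ m).comp (C a * X)).leadingCoeff := by rw [leadingCoeff, hdeg]
  rw [betaMomentPoly, coeff_C_mul, htop, leadingCoeff_comp (by rw [hlin]; exact one_ne_zero),
    (monic_ascPochhammer ℝ m).leadingCoeff, ascPochhammer_natDegree, leadingCoeff_C_mul_X,
    one_mul, div_eq_inv_mul]

theorem betaOpPoly_monomial (a : ℝ) (m : ℕ) (c : ℝ) :
    betaOpPoly a (monomial m c) = c • betaMomentPoly a m := by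
  simp [betaOpPoly]

theorem betaOpPoly_X_pow (a : ℝ) (m : ℕ) : betaOpPoly a (X ^ m) = betaMomentPoly a m := by
  rw [X_pow_eq_monomial, betaOpPoly_monomial, one_smul]

theorem natDegree_betaOpPoly_le (a : ℝ) (p : ℝ[X]) :
    (betaOpPoly a p).natDegree ≤ p.natDegree := by
  rw [betaOpPoly, lsum_apply, sum_def]
  refine natDegree_sum_le_of_forall_le _ _ fun m hm => ?_
  exact (natDegree_smul_le _ _).trans
    ((natDegree_betaMomentPoly_le a m).trans (le_natDegree_of_mem_supp m hm))

theorem eval_zero_betaOpPoly (a : ℝ) (p : ℝ[X]) : (betaOpPoly a p).eval 0 = p.eval 0 := by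
  induction p using Polynomial.induction_on' with
  | add p q hp hq => rw [map_add, eval_add, eval_add, hp, hq]
  | monomial m c =>
    rw [betaOpPoly_monomial, eval_smul, eval_betaMomentPoly, eval_monomial, mul_zero]
    rcases eq_or_ne m 0 with rfl | hm <;> simp [*]

theorem eval_one_betaOpPoly (ha : 0 < a) (p : ℝ[X]) : (betaOpPoly a p).eval 1 = p.eval 1 := by
  induction p using Polynomial.induction_on' with
  | add p q hp hq => rw [map_add, eval_add, eval_add, hp, hq]
  | monomial m c =>
    rw [betaOpPoly_monomial, eval_smul, eval_betaMomentPoly, eval_monomial, mul_one,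
      div_self (ascPochhammer_pos m a ha).ne', one_pow, smul_eq_mul]

theorem betaOp_eval_eq_eval_betaOpPoly (ha : 0 < a) {x : ℝ} (hx : x ∈ Set.Ioo (0:ℝ) 1)
    (p : ℝ[X]) : betaOp a (fun t => p.eval t) x = (betaOpPoly a p).eval x := by
  induction p using Polynomial.induction_on' with
  | add p q hp hq =>
    simp only [eval_add, map_add]
    rw [betaOp_add ha hx p.continuousOn q.continuousOn, hp, hq]
  | monomial m c =>
    simp only [eval_monomial, betaOpPoly_monomial, eval_smul, smul_eq_mul, betaOp_const_mul,
      betaOp_pow ha hx, eval_betaMomentPoly]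

end BetaOperatorOnPolynomials

theorem Ffun_eq_betaOp {n k : ℕ} (hn : n ≠ 0) (hk0 : k ≠ 0) (hkn : k ≠ n) (ρ : ℝ)
    (f : ℝ → ℝ) : Ffun n k ρ f = betaOp (n * ρ) f ((k : ℝ) / n) := by
  have hnR : (n : ℝ) ≠ 0 := Nat.cast_ne_zero.2 hn
  have hx : (n : ℝ) * ρ * (k / n) = k * ρ := by field_simp
  have hy : (n : ℝ) * ρ * (1 - k / n) = (n - k) * ρ := by field_simp
  rw [Ffun, if_neg hk0, if_neg hkn, betaOp, hx, hy]

theorem Ffun_eval_eq_eval_betaOpPoly {n k : ℕ} (hn : n ≠ 0) (hk : k ≤ n) {ρ : ℝ}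
    (hρ : 0 < ρ) (p : ℝ[X]) :
    Ffun n k ρ (fun t => p.eval t) = (betaOpPoly (n * ρ) p).eval ((k : ℝ) / n) := by
  have hnR : (0 : ℝ) < n := Nat.cast_pos.2 (Nat.pos_of_ne_zero hn)
  rcases eq_or_ne k 0 with rfl | hk0
  · simp [Ffun, eval_zero_betaOpPoly]
  rcases eq_or_ne k n with rfl | hkn
  · simp [Ffun, hn, hnR.ne', eval_one_betaOpPoly (mul_pos hnR hρ)]
  have hx : (k : ℝ) / n ∈ Set.Ioo (0:ℝ) 1 :=
    ⟨by positivity, (div_lt_one hnR).2 (Nat.cast_lt.2 (hk.lt_of_ne hkn))⟩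
  rw [Ffun_eq_betaOp hn hk0 hkn, betaOp_eval_eq_eval_betaOpPoly (mul_pos hnR hρ) hx]

/-- The Lupaş–Mühlbach Beta operator of order `nρ` maps
`u_{n+1}^ρ = e_{n+1} − L_n^ρ e_{n+1}` to
`((nρ)^{n+1}/(nρ)^{rising (n+1)}) · x(x−1)(x−1/n)⋯(x−(n−1)/n)`. -/
theorem beta_of_u (n : ℕ) (hn : 1 ≤ n) (ρ : ℝ) (hρ : 0 < ρ)
    (L : Polynomial ℝ) (hLdeg : L.natDegree ≤ n)
    (hL : ∀ k ≤ n, Ffun n k ρ (fun x => L.eval x) = Ffun n k ρ (fun x => x ^ (n + 1))) :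
    ∀ x ∈ Set.Ioo (0 : ℝ) 1,
      (betaFn ((n : ℝ) * ρ * x) ((n : ℝ) * ρ * (1 - x)))⁻¹ *
        ∫ t in (0:ℝ)..1,
          t ^ ((n : ℝ) * ρ * x - 1) * (1 - t) ^ ((n : ℝ) * ρ * (1 - x) - 1) *
            (t ^ (n + 1) - L.eval t) =
      (((n : ℝ) * ρ) ^ (n + 1) / (ascPochhammer ℝ (n + 1)).eval ((n : ℝ) * ρ)) *
        ∏ k ∈ Finset.range (n + 1), (x - (k : ℝ) / (n : ℝ)) := by
  intro x hx
  have hn0 : n ≠ 0 := Nat.one_le_iff_ne_zero.1 hn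
  have ha : 0 < (n : ℝ) * ρ := mul_pos (Nat.cast_pos.2 hn) hρ
  have hLHS := betaOp_eval_eq_eval_betaOpPoly ha hx (X ^ (n + 1) - L)
  simp only [betaOp, eval_sub, eval_pow, eval_X] at hLHS
  set Q := betaOpPoly ((n : ℝ) * ρ) (X ^ (n + 1) - L) with hQ_def
  have hQ_nodes : ∀ k ∈ range (n + 1), Q.eval ((k : ℝ) / n) = 0 := fun k hk => by
    have hk : k ≤ n := Nat.lt_succ_iff.1 (mem_range.1 hk)
    simpa [Q, ← Ffun_eval_eq_eval_betaOpPoly hn0 hk hρ, sub_eq_zero] using (hL k hk).symm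
  have hQ_deg : Q.natDegree ≤ #(range (n + 1)) := by
    refine (natDegree_betaOpPoly_le _ _).trans ((natDegree_sub_le _ _).trans ?_)
    simpa using hLdeg.trans n.le_succ
  have hQ_top : Q.coeff (n + 1) = ((n : ℝ) * ρ) ^ (n + 1) /
      (ascPochhammer ℝ (n + 1)).eval ((n : ℝ) * ρ) := by
    rw [hQ_def, map_sub, coeff_sub, betaOpPoly_X_pow, coeff_betaMomentPoly_self ha.ne',
      coeff_eq_zero_of_natDegree_lt ((natDegree_betaOpPoly_le _ L).trans_lt
        (hLdeg.trans_lt n.lt_succ_self)), sub_zero]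
  have hinj : Set.InjOn (fun k : ℕ => (k : ℝ) / n) (range (n + 1)) :=
    fun i _ j _ hij => Nat.cast_injective ((div_left_inj' (Nat.cast_ne_zero.2 hn0)).1 hij)
  have hQ := Lagrange.eq_C_coeff_mul_nodal hinj hQ_deg hQ_nodes
  rw [card_range, hQ_top] at hQ
  rw [hLHS, hQ, eval_mul, eval_C, Lagrange.eval_nodal]
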